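/- arXiv:2510.14974 — 3 statements merged into one kernel-verified Lean document; each statement's English description precedes it below -/
import Mathlib

section
/- Let t_1, …, t_N ∈ (0,1] be pairwise distinct, and for each n let x_{t_n}, ẋ_{t_n} ∈ ℝ be given scalars. Define g(t, x_0) = (x_0 − x_t + t ẋ_t) · N(x_t; (1−t) x_0, t²), the univariate Gaussian-weighted Fredholm kernel, and γ: ℝ → ℝ^N by γ(x_0) = (g(t_1, x_0), …, g(t_N, x_0)). Then the zero vector lies in the convex hull of the image {γ(x_0) : x_0 ∈ ℝ}. -/
open MeasureTheory Real Filter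

/-- Univariate Gaussian-weighted Fredholm kernel
`g(t, x0) = (x0 − x_t + t ẋ_t) · N(x_t; (1−t) x0, t²)`. -/
noncomputable def g1 (xt vt t x0 : ℝ) : ℝ :=
  (x0 - xt + t * vt) * ((Real.sqrt (2 * Real.pi * t^2))⁻¹ *
    Real.exp (-(xt - (1 - t) * x0)^2 / (2 * t^2)))

lemma lemA {N : ℕ} (t x v w : Fin N → ℝ) (ht : ∀ n, 0 < t n) (m : Fin N)
    (hwm : 0 < w m)
    (hr : ∀ n, w n ≠ 0 → n ≠ m → ((1 - t m) / t m) ^ 2 < ((1 - t n) / t n) ^ 2) :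
    ∃ x0 : ℝ, 0 < ∑ n, w n * g1 (x n) (v n) (t n) x0 := by
  classical
  set q : Fin N → ℝ → ℝ := fun n x0 => (x n - (1 - t n) * x0) ^ 2 / (2 * (t n) ^ 2) with hq
  set D : ℝ → ℝ := fun x0 => x0 * rexp (-q m x0) with hD
  set c : Fin N → ℝ := fun n => (Real.sqrt (2 * Real.pi * (t n) ^ 2))⁻¹ with hc
  have hcpos : ∀ n, 0 < c n := by
    intro n
    have h2 : 0 < 2 * Real.pi * (t n) ^ 2 :=
      mul_pos (by positivity) (pow_pos (ht n) 2)
    simpa [hc] using inv_pos.mpr (Real.sqrt_pos.mpr h2)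
  set L : Fin N → ℝ := fun n => if n = m then w m * c m else 0 with hL
  -- eventual formula for each term
  have hform : ∀ n, (fun x0 => w n * g1 (x n) (v n) (t n) x0 / D x0)
      =ᶠ[atTop] fun x0 => (w n * c n) *
        ((1 - (x n - t n * v n) * x0⁻¹) * rexp (q m x0 - q n x0)) := by
    intro n
    filter_upwards [eventually_gt_atTop (0 : ℝ)] with x0 hx0
    have hx0' : x0 ≠ 0 := ne_of_gt hx0
    have htn : (t n : ℝ) ≠ 0 := ne_of_gt (ht n)
    have htm : (t m : ℝ) ≠ 0 := ne_of_gt (ht m)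
    have hen : rexp ((x n - (1 - t n) * x0) ^ 2 / (2 * (t n) ^ 2)) ≠ 0 := Real.exp_ne_zero _
    have hem : rexp ((x m - (1 - t m) * x0) ^ 2 / (2 * (t m) ^ 2)) ≠ 0 := Real.exp_ne_zero _
    have hs : Real.sqrt (2 * Real.pi * (t n) ^ 2) ≠ 0 := by
      refine ne_of_gt (Real.sqrt_pos.mpr (mul_pos (by positivity) (pow_pos (ht n) 2)))
    simp only [g1, hq, hD, hc, Real.exp_sub, neg_div, Real.exp_neg]
    field_simp
    ring
  have key : ∀ n, Tendsto (fun x0 => w n * g1 (x n) (v n) (t n) x0 / D x0) atTop (nhds (L n)) := by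
    intro n
    by_cases hwn : w n = 0
    · have hnm : n ≠ m := by rintro rfl; rw [hwn] at hwm; exact lt_irrefl 0 hwm
      have : L n = 0 := by simp [hL, hnm]
      rw [this]
      simpa [hwn] using (tendsto_const_nhds : Tendsto (fun _ : ℝ => (0:ℝ)) atTop _)
    · have hlin : Tendsto (fun x0 : ℝ => 1 - (x n - t n * v n) * x0⁻¹) atTop (nhds 1) := by
        have := (tendsto_inv_atTop_zero (𝕜 := ℝ)).const_mul (x n - t n * v n)
        simpa using (tendsto_const_nhds (x := (1:ℝ)) (f := atTop)).sub this
      by_cases hnm : n = m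
      · subst hnm
        have hexp : ∀ x0 : ℝ, rexp (q n x0 - q n x0) = 1 := by
          intro x0; simp
        have : Tendsto (fun x0 => (w n * c n) *
            ((1 - (x n - t n * v n) * x0⁻¹) * rexp (q n x0 - q n x0))) atTop
            (nhds ((w n * c n) * 1)) := by
          refine Tendsto.const_mul _ ?_
          simpa [hexp] using hlin
        have hLn : L n = w n * c n := by simp [hL]
        rw [hLn]
        refine Tendsto.congr' (hform n).symm ?_
        simpa using this
      · -- dominated term
        have hrn := hr n hwn hnm
        set A : ℝ := (1 - t m) ^ 2 / (2 * (t m) ^ 2) - (1 - t n) ^ 2 / (2 * (t n) ^ 2) with hA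
        set B : ℝ := x n * (1 - t n) / (t n) ^ 2 - x m * (1 - t m) / (t m) ^ 2 with hB
        set C : ℝ := (x m) ^ 2 / (2 * (t m) ^ 2) - (x n) ^ 2 / (2 * (t n) ^ 2) with hC
        have htn : (t n : ℝ) ≠ 0 := ne_of_gt (ht n)
        have htm : (t m : ℝ) ≠ 0 := ne_of_gt (ht m)
        have hAneg : A < 0 := by
          rw [div_pow, div_pow] at hrn
          have e1 : (1 - t m) ^ 2 / (2 * (t m) ^ 2) = ((1 - t m) ^ 2 / (t m) ^ 2) / 2 := by
            ring
          have e2 : (1 - t n) ^ 2 / (2 * (t n) ^ 2) = ((1 - t n) ^ 2 / (t n) ^ 2) / 2 := by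
            ring
          rw [hA, e1, e2]
          linarith
        have hqf : ∀ x0 : ℝ, q m x0 - q n x0 = x0 * (A * x0 + B) + C := by
          intro x0
          rw [hq, hA, hB, hC]
          field_simp
          ring
        have hquad : Tendsto (fun x0 : ℝ => x0 * (A * x0 + B) + C) atTop atBot := by
          refine tendsto_atBot_add_const_right _ C ?_
          refine Tendsto.atTop_mul_atBot₀ tendsto_id ?_
          exact tendsto_atBot_add_const_right _ B (Tendsto.const_mul_atTop_of_neg hAneg tendsto_id)
        have hexp0 : Tendsto (fun x0 => rexp (q m x0 - q n x0)) atTop (nhds 0) := by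
          have := Real.tendsto_exp_atBot.comp hquad
          refine Tendsto.congr (fun x0 => ?_) this
          simp [Function.comp, hqf x0]
        have : Tendsto (fun x0 => (w n * c n) *
            ((1 - (x n - t n * v n) * x0⁻¹) * rexp (q m x0 - q n x0))) atTop
            (nhds ((w n * c n) * (1 * 0))) :=
          Tendsto.const_mul _ (hlin.mul hexp0)
        have hLn : L n = 0 := by simp [hL, hnm]
        rw [hLn]
        refine Tendsto.congr' (hform n).symm ?_
        simpa using this
  have hsum : Tendsto (fun x0 => (∑ n, w n * g1 (x n) (v n) (t n) x0) / D x0) atTop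
      (nhds (w m * c m)) := by
    have h1 : Tendsto (fun x0 => ∑ n, w n * g1 (x n) (v n) (t n) x0 / D x0) atTop
        (nhds (∑ n, L n)) := tendsto_finset_sum _ fun n _ => key n
    have h2 : (∑ n, L n) = w m * c m := by
      rw [hL]
      simp [Finset.sum_ite_eq']
    have h3 : ∀ x0 : ℝ, (∑ n, w n * g1 (x n) (v n) (t n) x0) / D x0
        = ∑ n, w n * g1 (x n) (v n) (t n) x0 / D x0 := fun x0 => Finset.sum_div _ _ _
    rw [← h2]
    exact Tendsto.congr (fun x0 => (h3 x0).symm) h1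
  have hpos : (0:ℝ) < w m * c m := mul_pos hwm (hcpos m)
  have h1 : ∀ᶠ x0 in atTop, 0 < (∑ n, w n * g1 (x n) (v n) (t n) x0) / D x0 :=
    hsum.eventually (eventually_gt_nhds hpos)
  have h2 : ∀ᶠ x0 : ℝ in atTop, 0 < D x0 := by
    filter_upwards [eventually_gt_atTop (0:ℝ)] with x0 hx0
    exact mul_pos hx0 (Real.exp_pos _)
  obtain ⟨x0, hx1, hx2⟩ := (h1.and h2).exists
  refine ⟨x0, ?_⟩
  have := mul_pos hx1 hx2
  rwa [div_mul_cancel₀ _ (ne_of_gt hx2)] at this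

lemma rate_inj {a b : ℝ} (ha : a ∈ Set.Ioc (0:ℝ) 1) (hb : b ∈ Set.Ioc (0:ℝ) 1)
    (h : ((1 - a) / a) ^ 2 = ((1 - b) / b) ^ 2) : a = b := by
  obtain ⟨ha0, ha1⟩ := ha
  obtain ⟨hb0, hb1⟩ := hb
  have hpa : 0 ≤ (1 - a) / a := div_nonneg (by linarith) ha0.le
  have hpb : 0 ≤ (1 - b) / b := div_nonneg (by linarith) hb0.le
  have h2 : (1 - a) / a = (1 - b) / b := by
    nlinarith [sq_nonneg ((1 - a) / a + (1 - b) / b), sq_nonneg ((1 - a) / a - (1 - b) / b)]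
  field_simp at h2
  nlinarith

lemma g1_neg (xt vt t x0 : ℝ) : g1 (-xt) (-vt) t x0 = -g1 xt vt t (-x0) := by
  simp only [g1]
  have e : (-xt - (1 - t) * x0) ^ 2 = (xt - (1 - t) * -x0) ^ 2 := by ring
  rw [e]
  ring

lemma lemB {N : ℕ} (t : Fin N → ℝ) (ht : ∀ n, t n ∈ Set.Ioc (0:ℝ) 1)
    (hdist : Function.Injective t) (x v w : Fin N → ℝ) (hw : w ≠ 0) :
    ∃ x0 : ℝ, 0 < ∑ n, w n * g1 (x n) (v n) (t n) x0 := by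
  classical
  set S : Finset (Fin N) := Finset.univ.filter (fun n => w n ≠ 0) with hS
  have hSne : S.Nonempty := by
    obtain ⟨n, hn⟩ := Function.ne_iff.mp hw
    exact ⟨n, by simp only [hS, Finset.mem_filter, Finset.mem_univ, true_and]; simpa using hn⟩
  obtain ⟨m, hmS, hmin⟩ := S.exists_min_image (fun n => ((1 - t n) / t n) ^ 2) hSne
  have hwm : w m ≠ 0 := by simpa [hS] using hmS
  have hr : ∀ n, w n ≠ 0 → n ≠ m → ((1 - t m) / t m) ^ 2 < ((1 - t n) / t n) ^ 2 := by
    intro n hn hnm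
    have hle := hmin n (by simp [hS, hn])
    rcases lt_or_eq_of_le hle with h | h
    · exact h
    · exact absurd (hdist (rate_inj (ht n) (ht m) (h.symm))) hnm
  rcases hwm.lt_or_gt with hneg | hpos
  · -- w m < 0 : reflect
    have hr' : ∀ n, (-w) n ≠ 0 → n ≠ m →
        ((1 - t m) / t m) ^ 2 < ((1 - t n) / t n) ^ 2 := by
      intro n hn hnm
      exact hr n (by simpa using hn) hnm
    obtain ⟨x0, hx0⟩ := lemA t (-x) (-v) (-w) (fun n => (ht n).1) m
      (by simpa using hneg) hr'
    refine ⟨-x0, ?_⟩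
    have : ∀ n, (-w) n * g1 ((-x) n) ((-v) n) (t n) x0
        = w n * g1 (x n) (v n) (t n) (-x0) := by
      intro n
      simp only [Pi.neg_apply]
      rw [g1_neg]
      ring
    calc (0:ℝ) < ∑ n, (-w) n * g1 ((-x) n) ((-v) n) (t n) x0 := hx0
      _ = ∑ n, w n * g1 (x n) (v n) (t n) (-x0) := by
          exact Finset.sum_congr rfl fun n _ => this n
  · exact lemA t x v w (fun n => (ht n).1) m hpos hr

lemma lin_sum {N : ℕ} (f : (Fin N → ℝ) →ₗ[ℝ] ℝ) (y : Fin N → ℝ) :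
    f y = ∑ n, y n * f (fun j => if n = j then 1 else 0) := by
  conv_lhs => rw [pi_eq_sum_univ y]
  rw [map_sum]
  exact Finset.sum_congr rfl fun n _ => by rw [f.map_smul, smul_eq_mul]

/-- Convex hull lemma: the zero vector lies in the convex hull of the image of
`γ(x0) = (g(t₁,x0), …, g(t_N,x0))`. -/
theorem stmt3 {N : ℕ} (t : Fin N → ℝ) (ht : ∀ n, t n ∈ Set.Ioc (0:ℝ) 1)
    (hdist : Function.Injective t) (x v : Fin N → ℝ) :
    (0 : Fin N → ℝ) ∈
      convexHull ℝ (Set.range fun x0 : ℝ => fun n => g1 (x n) (v n) (t n) x0) := by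
  classical
  by_contra h0
  set γ : ℝ → (Fin N → ℝ) := fun x0 => fun n => g1 (x n) (v n) (t n) x0 with hγ
  set Cv := convexHull ℝ (Set.range γ) with hCv
  by_cases hne : (interior Cv).Nonempty
  · -- nonempty interior : separate 0 from the open convex interior
    have h0' : (0 : Fin N → ℝ) ∉ interior Cv := fun h => h0 (interior_subset h)
    obtain ⟨f, hf⟩ := geometric_hahn_banach_open_point
      ((convex_convexHull ℝ (Set.range γ)).interior) isOpen_interior h0'
    have hf' : ∀ a ∈ interior Cv, f a < 0 := by
      intro a ha
      have := hf a ha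
      rwa [map_zero] at this
    set w : Fin N → ℝ := fun n => f (fun j => if n = j then 1 else 0) with hwdef
    have hfeq : ∀ y : Fin N → ℝ, f y = ∑ n, y n * w n := by
      intro y
      simpa using lin_sum (f : (Fin N → ℝ) →ₗ[ℝ] ℝ) y
    have hw : w ≠ 0 := by
      obtain ⟨a, ha⟩ := hne
      intro hw0
      have h1 := hf' a ha
      rw [hfeq a, hw0] at h1
      simp at h1
    have hle : ∀ x0 : ℝ, f (γ x0) ≤ 0 := by
      intro x0
      by_contra hpos
      push_neg at hpos
      obtain ⟨y, hy⟩ := hne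
      have hfy : f y < 0 := hf' y hy
      have hs : γ x0 ∈ Cv := subset_convexHull ℝ _ (Set.mem_range_self x0)
      set b : ℝ := min 1 (f (γ x0) / (f (γ x0) - f y)) with hb
      have hden : 0 < f (γ x0) - f y := by linarith
      have hb0 : 0 < b := lt_min one_pos (div_pos hpos hden)
      have hb1 : b ≤ 1 := min_le_left _ _
      have hmem := (convex_convexHull ℝ (Set.range γ)).combo_self_interior_mem_interior
        hs hy (by linarith : (0:ℝ) ≤ 1 - b) hb0 (by ring)
      have hcontr := hf' _ hmem
      rw [map_add, f.map_smul, f.map_smul, smul_eq_mul, smul_eq_mul] at hcontr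
      have hble : b * (f (γ x0) - f y) ≤ f (γ x0) := by
        calc b * (f (γ x0) - f y) ≤ (f (γ x0) / (f (γ x0) - f y)) * (f (γ x0) - f y) :=
              mul_le_mul_of_nonneg_right (min_le_right _ _) hden.le
          _ = f (γ x0) := div_mul_cancel₀ _ (ne_of_gt hden)
      nlinarith
    obtain ⟨x0, hx0⟩ := lemB t ht hdist x v w hw
    have he : f (γ x0) = ∑ n, w n * g1 (x n) (v n) (t n) x0 := by
      rw [hfeq]
      exact Finset.sum_congr rfl fun n _ => mul_comm _ _
    have := hle x0
    rw [he] at this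
    linarith
  · -- empty interior : the range lies in a proper affine subspace
    have hspan : affineSpan ℝ (Set.range γ) ≠ ⊤ := by
      intro htop
      have hni := interior_convexHull_nonempty_iff_affineSpan_eq_top.mpr htop
      rw [← hCv] at hni
      exact hne hni
    have hvs : vectorSpan ℝ (Set.range γ) ≠ ⊤ := fun htop =>
      hspan ((AffineSubspace.affineSpan_eq_top_iff_vectorSpan_eq_top_of_nonempty ℝ (Fin N → ℝ) (Fin N → ℝ)
        ⟨γ 0, Set.mem_range_self 0⟩).mpr htop)
    obtain ⟨f, hf0, hfmap⟩ := Submodule.exists_dual_map_eq_bot_of_lt_top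
      (p := vectorSpan ℝ (Set.range γ)) (lt_top_iff_ne_top.mpr hvs) inferInstance
    set w : Fin N → ℝ := fun n => f (fun j => if n = j then 1 else 0) with hwdef
    have hfeq : ∀ y : Fin N → ℝ, f y = ∑ n, y n * w n := fun y => lin_sum f y
    have hvanish : ∀ y ∈ vectorSpan ℝ (Set.range γ), f y = 0 := by
      intro y hy
      have hmm : f y ∈ Submodule.map f (vectorSpan ℝ (Set.range γ)) :=
        Submodule.mem_map_of_mem hy
      rw [hfmap] at hmm
      simpa using hmm
    have hconst : ∀ x0 : ℝ, f (γ x0) = f (γ 0) := by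
      intro x0
      have hmem : γ x0 - γ 0 ∈ vectorSpan ℝ (Set.range γ) := by
        exact
          vsub_mem_vectorSpan ℝ (Set.mem_range_self x0) (Set.mem_range_self 0)
      have hv := hvanish _ hmem
      rw [map_sub] at hv
      linarith
    have hw : w ≠ 0 := by
      intro hw0
      apply hf0
      apply LinearMap.ext
      intro y
      rw [hfeq y, hw0]
      simp
    obtain ⟨x0, hx0⟩ := lemB t ht hdist x v w hw
    obtain ⟨x1, hx1⟩ := lemB t ht hdist x v (-w) (neg_ne_zero.mpr hw)
    have e0 : f (γ x0) = ∑ n, w n * g1 (x n) (v n) (t n) x0 := by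
      rw [hfeq]
      exact Finset.sum_congr rfl fun n _ => mul_comm _ _
    have e1 : f (γ x1) = ∑ n, w n * g1 (x n) (v n) (t n) x1 := by
      rw [hfeq]
      exact Finset.sum_congr rfl fun n _ => mul_comm _ _
    have hx1' : (0:ℝ) < -∑ n, w n * g1 (x n) (v n) (t n) x1 := by
      have hsum : ∑ n, (-w) n * g1 (x n) (v n) (t n) x1
          = -∑ n, w n * g1 (x n) (v n) (t n) x1 := by
        rw [← Finset.sum_neg_distrib]
        exact Finset.sum_congr rfl fun n _ => by simp [neg_mul]
      rw [hsum] at hx1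
      exact hx1
    have c0 := hconst x0
    have c1 := hconst x1
    rw [e0] at c0
    rw [e1] at c1
    linarith
end

section
/- For each n with w_n ≠ 0, let r_n = (1−t_n)²/(2t_n²) be the decay rate of the kernel g(t_n, x_0) = (x_0 − x_{t_n} + t_n ẋ_{t_n}) (2π t_n²)^{−1/2} exp(−(x_{t_n} − (1−t_n) x_0)²/(2 t_n²)) as |x_0| → ∞, and let n* minimize r_n among indices with w_n ≠ 0, assumed to be a strict unique minimizer. Then h(x_0) = Σ_n w_n g(t_n, x_0) is asymptotically equivalent, as |x_0| → ∞, to the single term w_{n*} g(t_{n*}, x_0); in particular h takes both strictly positive and strictly negative values. -/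
open MeasureTheory Real Filter

private lemma aux_atTop (δ γ κ a : ℝ) (hδ : 0 < δ) :
    Tendsto (fun x : ℝ => (x - a) * Real.exp (-δ * x^2 + γ * x + κ)) atTop (nhds 0) := by
  have hlim : Tendsto (fun x : ℝ => 2 * (x ^ 1 * Real.exp (-x))) atTop (nhds 0) := by
    simpa using (tendsto_pow_mul_exp_neg_atTop_nhds_zero 1).const_mul 2
  apply squeeze_zero_norm' ?_ hlim
  filter_upwards [eventually_ge_atTop (1 : ℝ), eventually_ge_atTop (|a|),
    eventually_ge_atTop ((|γ| + |κ| + 1)/δ)] with X h1 h2 h3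
  have hδx : |γ| + |κ| + 1 ≤ δ * X := by
    rw [div_le_iff₀ hδ] at h3; linarith
  have hexp : -δ * X^2 + γ * X + κ ≤ -X := by
    nlinarith [le_abs_self γ, le_abs_self κ, abs_nonneg γ, abs_nonneg κ]
  have h4 : |X - a| ≤ 2 * X := by
    have ha1 := le_abs_self a
    have ha2 := neg_abs_le a
    rw [abs_le]; constructor <;> linarith
  rw [Real.norm_eq_abs, abs_mul, abs_of_pos (Real.exp_pos _)]
  calc |X - a| * Real.exp (-δ * X^2 + γ * X + κ)
      ≤ (2 * X) * Real.exp (-X) := by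
        apply mul_le_mul h4 (Real.exp_le_exp.mpr hexp) (Real.exp_pos _).le (by linarith)
    _ = 2 * (X ^ 1 * Real.exp (-X)) := by ring

private lemma aux_cocompact (δ γ κ a : ℝ) (hδ : 0 < δ) :
    Tendsto (fun x : ℝ => (x - a) * Real.exp (-δ * x^2 + γ * x + κ)) (cocompact ℝ) (nhds 0) := by
  rw [cocompact_eq_atBot_atTop, tendsto_sup]
  constructor
  · have h1 := aux_atTop δ (-γ) κ (-a) hδ
    have h2 : Tendsto (fun X : ℝ => (X - a) * Real.exp (-δ * X^2 + γ * X + κ)) atBot (nhds 0) := by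
      have h3 : Tendsto (fun X : ℝ => ((-X) - a) * Real.exp (-δ * (-X)^2 + γ * (-X) + κ)) atTop (nhds 0) := by
        have : (fun X : ℝ => ((-X) - a) * Real.exp (-δ * (-X)^2 + γ * (-X) + κ))
            = fun X : ℝ => -((X - (-a)) * Real.exp (-δ * X^2 + (-γ) * X + κ)) := by
          funext X; ring_nf
        rw [this]
        simpa using h1.neg
      have h4 := h3.comp tendsto_neg_atBot_atTop
      exact h4.congr (fun X => by simp [Function.comp])
    exact h2
  · exact aux_atTop δ γ κ a hδ

private lemma glittle (xn vn tn xs vs ts : ℝ) (htn : 0 < tn) (hts : 0 < ts)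
    (hlt : (1 - ts)^2 / (2 * ts^2) < (1 - tn)^2 / (2 * tn^2)) :
    (fun x0 => g1 xn vn tn x0) =o[cocompact ℝ] (fun x0 => g1 xs vs ts x0) := by
  have htn' : tn ≠ 0 := ne_of_gt htn
  have hts' : ts ≠ 0 := ne_of_gt hts
  have hCn : (0:ℝ) < (Real.sqrt (2 * Real.pi * tn^2))⁻¹ := by positivity
  have hCs : (0:ℝ) < (Real.sqrt (2 * Real.pi * ts^2))⁻¹ := by positivity
  set δ : ℝ := (1 - tn)^2 / (2 * tn^2) - (1 - ts)^2 / (2 * ts^2) with hδdef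
  have hδpos : 0 < δ := sub_pos.mpr hlt
  set γ : ℝ := xn * (1 - tn) / tn^2 - xs * (1 - ts) / ts^2 with hγdef
  set κ : ℝ := -xn^2 / (2 * tn^2) + xs^2 / (2 * ts^2) with hκdef
  have hQ : ∀ x0 : ℝ, -(xn - (1 - tn) * x0)^2 / (2 * tn^2)
      = (-δ * x0^2 + γ * x0 + κ) + (-(xs - (1 - ts) * x0)^2 / (2 * ts^2)) := by
    intro x0
    rw [hδdef, hγdef, hκdef]
    field_simp
    ring
  have hne : ∀ᶠ x0 in cocompact ℝ, x0 ≠ xs - ts * vs := by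
    rw [cocompact_eq_atBot_atTop, eventually_sup]
    constructor
    · filter_upwards [eventually_lt_atBot (xs - ts * vs)] with x0 hx0 using ne_of_lt hx0
    · filter_upwards [eventually_gt_atTop (xs - ts * vs)] with x0 hx0 using ne_of_gt hx0
  refine (Asymptotics.isLittleO_iff_tendsto' ?_).mpr ?_
  · filter_upwards [hne] with x0 hx0 hzero
    exfalso
    have hfac : x0 - xs + ts * vs ≠ 0 := by
      intro hc; apply hx0; linarith
    exact (mul_ne_zero hfac (mul_ne_zero (ne_of_gt hCs) (Real.exp_ne_zero _))) hzero
  · have h2 : Tendsto (fun x0 : ℝ => (x0 - (xs - ts * vs))⁻¹) (cocompact ℝ) (nhds 0) := by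
      rw [cocompact_eq_atBot_atTop, tendsto_sup]
      constructor
      · have hb : Tendsto (fun x0 : ℝ => (xs - ts * vs) - x0) atBot atTop := by
          simpa [sub_eq_add_neg] using tendsto_atTop_add_const_left atBot (xs - ts * vs) tendsto_neg_atBot_atTop
        refine Tendsto.congr (fun x0 => ?_) (by simpa using (tendsto_inv_atTop_zero.comp hb).neg)
        show -(((xs - ts * vs) - x0)⁻¹) = (x0 - (xs - ts * vs))⁻¹
        rw [neg_inv, neg_sub]
      · apply Filter.Tendsto.inv_tendsto_atTop
        simpa [sub_eq_add_neg] using tendsto_atTop_add_const_right atTop (-(xs - ts * vs)) tendsto_id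
    have hF : Tendsto (fun x0 : ℝ => ((x0 - (xn - tn * vn)) * Real.exp (-δ * x0^2 + γ * x0 + κ)) *
        (((Real.sqrt (2 * Real.pi * tn^2))⁻¹ / (Real.sqrt (2 * Real.pi * ts^2))⁻¹) *
          (x0 - (xs - ts * vs))⁻¹)) (cocompact ℝ) (nhds 0) := by
      have := (aux_cocompact δ γ κ (xn - tn * vn) hδpos).mul
        (h2.const_mul ((Real.sqrt (2 * Real.pi * tn^2))⁻¹ / (Real.sqrt (2 * Real.pi * ts^2))⁻¹))
      simpa using this
    apply hF.congr'
    filter_upwards [hne] with x0 hx0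
    have hfac : x0 - xs + ts * vs ≠ 0 := by intro hc; apply hx0; linarith
    have hE : Real.exp (-(xn - (1 - tn) * x0)^2 / (2 * tn^2))
        = Real.exp (-δ * x0^2 + γ * x0 + κ) * Real.exp (-(xs - (1 - ts) * x0)^2 / (2 * ts^2)) := by
      rw [← Real.exp_add, hQ x0]
    have halg : ∀ A B Cn' Cs' E Es : ℝ, B ≠ 0 → Cs' ≠ 0 → Es ≠ 0 →
        (A * E) * ((Cn' / Cs') * B⁻¹) = (A * (Cn' * (E * Es))) / (B * (Cs' * Es)) := by
      intro A B Cn' Cs' E Es hB hCs' hEs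
      field_simp
    unfold g1
    rw [hE, show x0 - (xn - tn * vn) = x0 - xn + tn * vn from by ring,
      show x0 - (xs - ts * vs) = x0 - xs + ts * vs from by ring]
    exact halg _ _ _ _ _ _ hfac (ne_of_gt hCs) (Real.exp_ne_zero _)

private lemma sign_pos_of_close {u f : ℝ} (hb : ‖u - f‖ ≤ 1/2 * ‖f‖) (hf : 0 < f) : 0 < u := by
  rw [Real.norm_eq_abs, Real.norm_eq_abs, abs_of_pos hf] at hb
  have := abs_le.mp hb
  linarith [this.1]

private lemma sign_neg_of_close {u f : ℝ} (hb : ‖u - f‖ ≤ 1/2 * ‖f‖) (hf : f < 0) : u < 0 := by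
  rw [Real.norm_eq_abs, Real.norm_eq_abs, abs_of_neg hf] at hb
  have := abs_le.mp hb
  linarith [this.2]


/-- Dominant-term asymptotics: with a unique slowest decay rate `r n*` among
indices with nonzero weight, `h = Σ w_n g(t_n, ·)` is asymptotically equivalent
to `w_{n*} g(t_{n*}, ·)` as `|x0| → ∞`; in particular `h` takes both signs. -/
theorem stmt4 {N : ℕ} (t : Fin N → ℝ) (ht : ∀ n, t n ∈ Set.Ioo (0:ℝ) 1)
    (hdist : Function.Injective t) (w : Fin N → ℝ) (hw : w ≠ 0)
    (x v : Fin N → ℝ) (r : Fin N → ℝ)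
    (hr : r = fun n => (1 - t n)^2 / (2 * (t n)^2))
    (nstar : Fin N) (hn : w nstar ≠ 0)
    (hmin : ∀ n, n ≠ nstar → w n ≠ 0 → r nstar < r n)
    (h : ℝ → ℝ) (hh : h = fun x0 => ∑ n, w n * g1 (x n) (v n) (t n) x0) :
    Asymptotics.IsEquivalent (Filter.cocompact ℝ) h
      (fun x0 => w nstar * g1 (x nstar) (v nstar) (t nstar) x0) ∧
    (∃ a, 0 < h a) ∧ (∃ b, h b < 0) := by
  subst hr hh
  set f : ℝ → ℝ := fun x0 => w nstar * g1 (x nstar) (v nstar) (t nstar) x0 with hf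
  set u : ℝ → ℝ := fun x0 => ∑ n, w n * g1 (x n) (v n) (t n) x0 with hu
  have hlo : (fun x0 => u x0 - f x0) =o[cocompact ℝ] f := by
    have heq : (fun x0 => u x0 - f x0)
        = fun x0 => ∑ n ∈ Finset.univ.erase nstar, w n * g1 (x n) (v n) (t n) x0 := by
      funext x0
      simp only [hu, hf]
      rw [← Finset.sum_erase_add _ _ (Finset.mem_univ nstar)]
      ring
    rw [heq]
    apply Asymptotics.IsLittleO.fun_sum
    intro n hn'
    have hne : n ≠ nstar := Finset.ne_of_mem_erase hn'
    by_cases hwn : w n = 0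
    · simpa [hwn] using (Asymptotics.isLittleO_zero f (cocompact ℝ))
    · have hrlt := hmin n hne hwn
      simp only at hrlt
      have hlittle := glittle (x n) (v n) (t n) (x nstar) (v nstar) (t nstar)
        (ht n).1 (ht nstar).1 hrlt
      exact (hlittle.const_mul_left (w n)).const_mul_right hn
  have hequiv : Asymptotics.IsEquivalent (Filter.cocompact ℝ) u f := hlo
  have hbound := hlo.def (by norm_num : (0:ℝ) < 1/2)
  have hleTop : (atTop : Filter ℝ) ≤ cocompact ℝ := by
    rw [cocompact_eq_atBot_atTop]; exact le_sup_right
  have hleBot : (atBot : Filter ℝ) ≤ cocompact ℝ := by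
    rw [cocompact_eq_atBot_atTop]; exact le_sup_left
  have hCs : (0:ℝ) < (Real.sqrt (2 * Real.pi * (t nstar)^2))⁻¹ := by
    have := (ht nstar).1.ne'
    positivity
  have hgTop : ∀ᶠ x0 in atTop, 0 < g1 (x nstar) (v nstar) (t nstar) x0 := by
    filter_upwards [eventually_gt_atTop (x nstar - t nstar * v nstar)] with x0 hx0
    have hpos : 0 < x0 - x nstar + t nstar * v nstar := by linarith
    exact mul_pos hpos (mul_pos hCs (Real.exp_pos _))
  have hgBot : ∀ᶠ x0 in atBot, g1 (x nstar) (v nstar) (t nstar) x0 < 0 := by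
    filter_upwards [eventually_lt_atBot (x nstar - t nstar * v nstar)] with x0 hx0
    have h1 : x0 - x nstar + t nstar * v nstar < 0 := by linarith
    exact mul_neg_of_neg_of_pos h1 (mul_pos hCs (Real.exp_pos _))
  refine ⟨hequiv, ?_, ?_⟩
  · -- ∃ a, 0 < u a
    rcases lt_or_gt_of_ne hn with hwneg | hwpos
    · -- w* < 0 : use atBot where g < 0, so f > 0
      have hev : ∀ᶠ x0 in atBot, 0 < u x0 := by
        filter_upwards [hbound.filter_mono hleBot, hgBot] with x0 hb hg
        exact sign_pos_of_close hb (mul_pos_of_neg_of_neg hwneg hg)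
      exact hev.exists
    · have hev : ∀ᶠ x0 in atTop, 0 < u x0 := by
        filter_upwards [hbound.filter_mono hleTop, hgTop] with x0 hb hg
        exact sign_pos_of_close hb (mul_pos hwpos hg)
      exact hev.exists
  · rcases lt_or_gt_of_ne hn with hwneg | hwpos
    · have hev : ∀ᶠ x0 in atTop, u x0 < 0 := by
        filter_upwards [hbound.filter_mono hleTop, hgTop] with x0 hb hg
        exact sign_neg_of_close hb (mul_neg_of_neg_of_pos hwneg hg)
      exact hev.exists
    · have hev : ∀ᶠ x0 in atBot, u x0 < 0 := by
        filter_upwards [hbound.filter_mono hleBot, hgBot] with x0 hb hg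
        exact sign_neg_of_close hb (mul_neg_of_pos_of_neg hwpos hg)
      exact hev.exists
end

section
/- In the limit s_x → 0⁺, the GMFlow posterior update reduces to discrete support: for a mixture of Dirac atoms Σ_k A_k δ_{m_k} reweighted by the Gaussian likelihood ratio with parameters ν and ζ, the posterior is Σ_k A_k' δ_{m_k} with logits a_k' = log A_k + m_k · (ν − ½ ζ m_k), i.e., A_k' = softmax(a')_k. Formally, the posterior mean of the Gaussian mixture update converges to Σ_k softmax(a')_k m_k as s_x → 0. -/
open MeasureTheory Real Filter

noncomputable def gd (σ2 x μ : ℝ) : ℝ :=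
  (Real.sqrt (2 * Real.pi * σ2))⁻¹ * Real.exp (-(x - μ)^2 / (2 * σ2))

noncomputable def gdC {D : ℕ} (σ2 : ℝ) (x μ : Fin D → ℝ) : ℝ :=
  ∏ i, gd σ2 (x i) (μ i)

noncomputable def fwdW {D : ℕ} (t : ℝ) (x x0 : Fin D → ℝ) : ℝ :=
  gdC (t^2) x ((1 - t) • x0)

noncomputable def dotp {C : ℕ} (a b : Fin C → ℝ) : ℝ := ∑ i, a i * b i

/-- Discrete-support limit of the GMFlow posterior update: as `s_x → 0⁺`, the
posterior mean of the updated Gaussian mixture converges to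
`Σ_k softmax(a')_k m_k` with logits `a'_k = log A_k + m_k·(ν − ½ζ m_k)`. -/
theorem stmt11 {C K : ℕ} (A : Fin K → ℝ) (hA : ∀ k, 0 < A k)
    (m : Fin K → (Fin C → ℝ)) (ν : Fin C → ℝ) (ζ : ℝ) (hζ : 0 ≤ ζ)
    (a' : Fin K → ℝ)
    (ha' : a' = fun k => Real.log (A k) + dotp (m k) (ν - (ζ/2) • m k))
    (μ' : ℝ → Fin K → (Fin C → ℝ))
    (hμ' : μ' = fun sx k => (sx^2 * ζ + 1)⁻¹ • (sx^2 • ν + m k))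
    (A' : ℝ → Fin K → ℝ)
    (hA' : A' = fun sx k =>
      Real.exp (Real.log (A k) + dotp (m k) (ν - (ζ/2) • m k) / (sx^2 * ζ + 1)) /
      ∑ z, Real.exp (Real.log (A z) + dotp (m z) (ν - (ζ/2) • m z) / (sx^2 * ζ + 1))) :
    Tendsto (fun sx => ∑ k, A' sx k • μ' sx k) (nhdsWithin 0 (Set.Ioi 0))
      (nhds (∑ k, (Real.exp (a' k) / ∑ z, Real.exp (a' z)) • m k)) := by
  subst ha' hμ' hA'
  apply tendsto_finset_sum
  intro k _
  apply Tendsto.mono_left _ nhdsWithin_le_nhds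
  have hbase : Tendsto (fun sx : ℝ => sx^2 * ζ + 1) (nhds 0) (nhds 1) := by
    have h : ContinuousAt (fun sx : ℝ => sx^2 * ζ + 1) 0 := by fun_prop
    have := h.tendsto
    norm_num at this
    exact this
  have hexp : ∀ z : Fin K, Tendsto
      (fun sx : ℝ => Real.exp (Real.log (A z) + dotp (m z) (ν - (ζ/2) • m z) / (sx^2 * ζ + 1)))
      (nhds 0) (nhds (Real.exp (Real.log (A z) + dotp (m z) (ν - (ζ/2) • m z)))) := by
    intro z
    have := (Real.continuous_exp.tendsto _).comp
      (((tendsto_const_nhds (x := dotp (m z) (ν - (ζ/2) • m z))).div hbase one_ne_zero).const_add (Real.log (A z)))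
    simpa [Function.comp_def] using this
  have hsum : Tendsto
      (fun sx : ℝ => ∑ z, Real.exp (Real.log (A z) + dotp (m z) (ν - (ζ/2) • m z) / (sx^2 * ζ + 1)))
      (nhds 0) (nhds (∑ z, Real.exp (Real.log (A z) + dotp (m z) (ν - (ζ/2) • m z)))) :=
    tendsto_finset_sum _ fun z _ => hexp z
  have hpos : (0:ℝ) < ∑ z, Real.exp (Real.log (A z) + dotp (m z) (ν - (ζ/2) • m z)) :=
    Finset.sum_pos (fun z _ => Real.exp_pos _) ⟨k, Finset.mem_univ k⟩
  have hμ : Tendsto (fun sx : ℝ => (sx^2 * ζ + 1)⁻¹ • (sx^2 • ν + m k)) (nhds 0) (nhds (m k)) := by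
    have hsq : Tendsto (fun sx : ℝ => sx^2) (nhds (0:ℝ)) (nhds 0) := by
      have h : ContinuousAt (fun sx : ℝ => sx^2) 0 := by fun_prop
      simpa using h.tendsto
    have := (hbase.inv₀ one_ne_zero).smul ((hsq.smul_const ν).add (tendsto_const_nhds (x := m k)))
    simpa using this
  exact ((hexp k).div hsum hpos.ne').smul hμ
end
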